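/- Let n ≥ 1, let ⟨z,w⟩_{n,1} = z₁w̄₁ + ⋯ + zₙw̄ₙ − z_{n+1}w̄_{n+1} on ℂ^{n+1}, let 𝔹ⁿ be the open unit ball of ℂⁿ, and for a nonzero vector z ∈ ℂ^{n+1} let [z] ∈ ℙⁿ denote the complex line it spans. The map from ℂⁿ × 𝔹ⁿ to ℙⁿ × ℙⁿ sending (u, v) to the pair ([(u₁,…,uₙ, 1 + u₁v₁ + ⋯ + uₙvₙ)], [(v̄₁,…,v̄ₙ, 1)]) is a bijection onto the set W₁,₂ = {([z],[w]) ∈ ℙⁿ × ℙⁿ : ⟨z,w⟩_{n,1} ≠ 0 and ⟨w,w⟩_{n,1} < 0}. -/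

import Mathlib

/-!
Both points can be normalised inside their lines. Since `⟨w,w⟩_{n,1} < 0` forces `w_{n+1} ≠ 0`,
the line `[w]` has a unique representative with last coordinate `1`, namely `(v̄, 1)`, and for it
`⟨w,w⟩_{n,1} < 0` reads `‖v‖ < 1`. Then `⟨z,(v̄,1)⟩_{n,1} ≠ 0`, so `[z]` has a unique
representative with `⟨z,(v̄,1)⟩_{n,1} = -1`, and solving this equation for its last coordinate
gives exactly `(u, 1 + u·v)`.
-/

/-- The hermitian form `⟨z,w⟩_{n,1} = z₁w̄₁ + ⋯ + zₙw̄ₙ − z_{n+1}w̄_{n+1}` on `ℂ^{n+1}`. -/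
noncomputable def hermForm (n : ℕ) (z w : Fin (n + 1) → ℂ) : ℂ :=
  (∑ i : Fin n, z i.castSucc * starRingEnd ℂ (w i.castSucc)) -
    z (Fin.last n) * starRingEnd ℂ (w (Fin.last n))

/-- The vector `(u₁, …, uₙ, 1 + u₁v₁ + ⋯ + uₙvₙ)`. -/
noncomputable def vecZ' (n : ℕ) (u v : Fin n → ℂ) : Fin (n + 1) → ℂ :=
  Fin.snoc u (1 + ∑ i : Fin n, u i * v i)

/-- The vector `(v̄₁, …, v̄ₙ, 1)`. -/
noncomputable def vecW' (n : ℕ) (v : Fin n → ℂ) : Fin (n + 1) → ℂ :=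
  Fin.snoc (fun i => starRingEnd ℂ (v i)) 1

lemma vecZ'_ne_zero (n : ℕ) (u v : Fin n → ℂ) : vecZ' n u v ≠ 0 := by
  intro h
  by_cases hu : u = 0
  · have := congrFun h (Fin.last n)
    simp [vecZ', hu] at this
  · obtain ⟨i, hi⟩ := Function.ne_iff.mp hu
    have := congrFun h i.castSucc
    simp [vecZ'] at this
    exact hi (by simpa using this)

lemma vecW'_ne_zero (n : ℕ) (v : Fin n → ℂ) : vecW' n v ≠ 0 := by
  intro h
  simpa [vecW'] using congrFun h (Fin.last n)

/-- The map `ℂⁿ × 𝔹ⁿ → ℙⁿ × ℙⁿ`, `(u,v) ↦ ([(u, 1 + u·v)], [(v̄, 1)])`. -/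
noncomputable def F₁₂ (n : ℕ) :
    EuclideanSpace ℂ (Fin n) × EuclideanSpace ℂ (Fin n) →
      Projectivization ℂ (Fin (n + 1) → ℂ) × Projectivization ℂ (Fin (n + 1) → ℂ) :=
  fun p =>
    (Projectivization.mk ℂ (vecZ' n p.1 p.2) (vecZ'_ne_zero n p.1 p.2),
     Projectivization.mk ℂ (vecW' n p.2) (vecW'_ne_zero n p.2))

/-- The domain `W₁,₂ = {([z],[w]) : ⟨z,w⟩_{n,1} ≠ 0 and ⟨w,w⟩_{n,1} < 0}` in `ℙⁿ × ℙⁿ`. -/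
def W₁₂ (n : ℕ) :
    Set (Projectivization ℂ (Fin (n + 1) → ℂ) × Projectivization ℂ (Fin (n + 1) → ℂ)) :=
  {P | ∃ (z w : Fin (n + 1) → ℂ) (hz : z ≠ 0) (hw : w ≠ 0),
    P = (Projectivization.mk ℂ z hz, Projectivization.mk ℂ w hw) ∧
    hermForm n z w ≠ 0 ∧ (hermForm n w w).re < 0}

open ComplexConjugate

namespace Projectivization

variable {K V : Type*} [DivisionRing K] [AddCommGroup V] [Module K V]

theorem eq_of_mk_eq_of_apply_eq (f : V →ₗ[K] K) {v w : V} (hv : v ≠ 0) (hw : w ≠ 0)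
    (h : mk K v hv = mk K w hw) (hfw : f w ≠ 0) (hf : f v = f w) : v = w := by
  obtain ⟨a, rfl⟩ := (mk_eq_mk_iff' K _ _ hv hw).1 h
  rw [map_smul, smul_eq_mul] at hf
  rw [mul_right_cancel₀ hfw (hf.trans (one_mul _).symm), one_smul]

end Projectivization

theorem EuclideanSpace.mem_ball_zero_one_iff {𝕜 ι : Type*} [RCLike 𝕜] [Fintype ι]
    (x : EuclideanSpace 𝕜 ι) : x ∈ Metric.ball 0 1 ↔ ∑ i, ‖x i‖ ^ 2 < 1 := by
  rw [mem_ball_zero_iff, ← EuclideanSpace.norm_sq_eq, sq_lt_one_iff₀ (norm_nonneg x)]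

section hermForm

variable (n : ℕ)

theorem hermForm_smul_left (c : ℂ) (z w : Fin (n + 1) → ℂ) :
    hermForm n (c • z) w = c * hermForm n z w := by
  simp only [hermForm, Pi.smul_apply, smul_eq_mul, mul_sub, Finset.mul_sum, mul_assoc]

theorem hermForm_smul_right (c : ℂ) (z w : Fin (n + 1) → ℂ) :
    hermForm n z (c • w) = conj c * hermForm n z w := by
  simp only [hermForm, Pi.smul_apply, smul_eq_mul, map_mul, mul_sub, Finset.mul_sum,
    mul_left_comm (conj c)]

theorem hermForm_add_left (z z' w : Fin (n + 1) → ℂ) :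
    hermForm n (z + z') w = hermForm n z w + hermForm n z' w := by
  simp only [hermForm, Pi.add_apply, add_mul, Finset.sum_add_distrib]
  ring

noncomputable def hermFormLeft (w : Fin (n + 1) → ℂ) : (Fin (n + 1) → ℂ) →ₗ[ℂ] ℂ where
  toFun z := hermForm n z w
  map_add' z z' := hermForm_add_left n z z' w
  map_smul' c z := hermForm_smul_left n c z w

theorem hermForm_self_re (w : Fin (n + 1) → ℂ) :
    (hermForm n w w).re = ∑ i : Fin n, ‖w i.castSucc‖ ^ 2 - ‖w (Fin.last n)‖ ^ 2 := by
  simp only [hermForm, Complex.mul_conj', Complex.sub_re, Complex.re_sum]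
  norm_cast

theorem hermForm_vecZ'_vecW' (u v : Fin n → ℂ) : hermForm n (vecZ' n u v) (vecW' n v) = -1 := by
  simp only [hermForm, vecZ', vecW', Fin.snoc_castSucc, Fin.snoc_last, map_one, mul_one,
    Complex.conj_conj]
  ring

theorem hermForm_vecW'_self_re (v : Fin n → ℂ) :
    (hermForm n (vecW' n v) (vecW' n v)).re = ∑ i, ‖v i‖ ^ 2 - 1 := by
  simp [hermForm_self_re, vecW']

theorem eq_vecZ'_of_hermForm_eq_neg_one {z : Fin (n + 1) → ℂ} {v : Fin n → ℂ}
    (hz : hermForm n z (vecW' n v) = -1) : z = vecZ' n (fun i => z i.castSucc) v := by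
  refine funext (Fin.lastCases ?_ fun i => by simp [vecZ'])
  simp only [hermForm, vecW', vecZ', Fin.snoc_castSucc, Fin.snoc_last, Complex.conj_conj,
    map_one, mul_one] at hz ⊢
  linear_combination -hz

theorem eq_vecW'_of_last_eq_one {w : Fin (n + 1) → ℂ} (hw : w (Fin.last n) = 1) :
    w = vecW' n (fun i => conj (w i.castSucc)) := by
  refine funext (Fin.lastCases ?_ fun i => by simp [vecW'])
  simpa [vecW'] using hw

theorem exists_smul_eq_vecW' {w : Fin (n + 1) → ℂ} (hw : (hermForm n w w).re < 0) :
    ∃ c : ℂ, c ≠ 0 ∧ ∃ v : Fin n → ℂ, c • w = vecW' n v ∧ ∑ i, ‖v i‖ ^ 2 < 1 := by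
  have hlast : w (Fin.last n) ≠ 0 := by
    intro h0
    rw [hermForm_self_re, h0, norm_zero] at hw
    have : 0 ≤ ∑ i : Fin n, ‖w i.castSucc‖ ^ 2 := by positivity
    linarith
  set c := (w (Fin.last n))⁻¹
  have hc : c ≠ 0 := inv_ne_zero hlast
  have hcw := eq_vecW'_of_last_eq_one n (w := c • w) (by simp [c, hlast])
  refine ⟨c, hc, _, hcw, ?_⟩
  have h := hermForm_vecW'_self_re n fun i => conj ((c • w) i.castSucc)
  rw [← hcw, hermForm_smul_left, hermForm_smul_right, ← mul_assoc, Complex.mul_conj',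
    ← Complex.ofReal_pow, Complex.re_ofReal_mul] at h
  nlinarith [mul_neg_of_pos_of_neg (pow_pos (norm_pos_iff.2 hc) 2) hw]

theorem exists_smul_eq_vecZ' {z : Fin (n + 1) → ℂ} {v : Fin n → ℂ}
    (hz : hermForm n z (vecW' n v) ≠ 0) : ∃ (c : ℂ) (u : Fin n → ℂ), c • z = vecZ' n u v :=
  ⟨-(hermForm n z (vecW' n v))⁻¹, _, eq_vecZ'_of_hermForm_eq_neg_one n <| by
    rw [hermForm_smul_left, neg_mul, inv_mul_cancel₀ hz]⟩

end hermForm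

theorem vecW'_injective (n : ℕ) : Function.Injective (vecW' n) := fun v v' h =>
  funext fun i => (starRingEnd ℂ).injective <| by simpa [vecW'] using congrFun h i.castSucc

theorem vecZ'_left_injective (n : ℕ) (v : Fin n → ℂ) : Function.Injective (vecZ' n · v) :=
  fun u u' h => funext fun i => by simpa [vecZ'] using congrFun h i.castSucc

theorem F₁₂_injective (n : ℕ) : Function.Injective (F₁₂ n) := by
  rintro ⟨u, v⟩ ⟨u', v'⟩ h
  simp only [F₁₂, Prod.mk.injEq] at h
  obtain rfl : v = v' := WithLp.ofLp_injective 2 <| vecW'_injective n <|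
    Projectivization.eq_of_mk_eq_of_apply_eq (LinearMap.proj (Fin.last n)) _ _ h.2
      (by simp [vecW']) (by simp [vecW'])
  obtain rfl : u = u' := WithLp.ofLp_injective 2 <| vecZ'_left_injective n v <|
    Projectivization.eq_of_mk_eq_of_apply_eq (hermFormLeft n (vecW' n v)) _ _ h.1
      (by simp [hermFormLeft, hermForm_vecZ'_vecW'])
      (by simp [hermFormLeft, hermForm_vecZ'_vecW'])
  rfl

theorem F₁₂_mapsTo (n : ℕ) :
    Set.MapsTo (F₁₂ n) (Set.univ ×ˢ Metric.ball 0 1) (W₁₂ n) := by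
  rintro ⟨u, v⟩ ⟨-, hv⟩
  refine ⟨_, _, _, _, rfl, by simp [hermForm_vecZ'_vecW'], ?_⟩
  rw [hermForm_vecW'_self_re]
  linarith [(EuclideanSpace.mem_ball_zero_one_iff v).1 hv]

theorem F₁₂_surjOn (n : ℕ) :
    Set.SurjOn (F₁₂ n) (Set.univ ×ˢ Metric.ball 0 1) (W₁₂ n) := by
  rintro _ ⟨z, w, hz, hw, rfl, hzw, hww⟩
  obtain ⟨a, ha, v, hwv, hv⟩ := exists_smul_eq_vecW' n hww
  have hzv : hermForm n z (vecW' n v) ≠ 0 := by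
    rw [← hwv, hermForm_smul_right]
    exact mul_ne_zero ((map_ne_zero _).2 ha) hzw
  obtain ⟨b, u, hzu⟩ := exists_smul_eq_vecZ' n hzv
  refine ⟨(WithLp.toLp 2 u, WithLp.toLp 2 v),
    ⟨trivial, (EuclideanSpace.mem_ball_zero_one_iff _).2 hv⟩, Prod.ext ?_ ?_⟩
  · exact (Projectivization.mk_eq_mk_iff' ℂ _ _ _ hz).2 ⟨b, hzu⟩
  · exact (Projectivization.mk_eq_mk_iff' ℂ _ _ _ hw).2 ⟨a, hwv⟩

theorem stmt_13_general (n : ℕ) :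
    Set.BijOn (F₁₂ n)
      ((Set.univ : Set (EuclideanSpace ℂ (Fin n))) ×ˢ
        Metric.ball (0 : EuclideanSpace ℂ (Fin n)) 1)
      (W₁₂ n) :=
  ⟨F₁₂_mapsTo n, (F₁₂_injective n).injOn, F₁₂_surjOn n⟩

/-- Example 6.3: `(u,v) ↦ ([(u, 1 + u·v)], [(v̄, 1)])` is a bijection from `ℂⁿ × 𝔹ⁿ`
onto `W₁,₂`. -/
theorem stmt_13 (n : ℕ) (hn : 1 ≤ n) :
    Set.BijOn (F₁₂ n)
      ((Set.univ : Set (EuclideanSpace ℂ (Fin n))) ×ˢ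
        Metric.ball (0 : EuclideanSpace ℂ (Fin n)) 1)
      (W₁₂ n) :=
  stmt_13_general n
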